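/- arXiv:1908.11264 — 5 statements merged into one kernel-verified Lean document; each statement's English description precedes it below -/
import Mathlib

section
/- In GLP, for ordinals α > β, GLP proves ⟨α⟩⊤ → (⟨β⟩φ ↔ ⟨α⟩⟨β⟩φ). -/
/-- Formulas of transfinite polymodal provability logic GLP, with
modalities `[ξ]` indexed by ordinals. -/
inductive GLPFormula : Type 1
  | bot : GLPFormula
  | var : ℕ → GLPFormula
  | imp : GLPFormula → GLPFormula → GLPFormula
  | box : Ordinal.{0} → GLPFormula → GLPFormula

namespace GLPFormula

def neg (a : GLPFormula) : GLPFormula := a.imp bot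
def top : GLPFormula := neg bot
def and (a b : GLPFormula) : GLPFormula := (a.imp b.neg).neg
def or (a b : GLPFormula) : GLPFormula := a.neg.imp b
def iff (a b : GLPFormula) : GLPFormula := (a.imp b).and (b.imp a)
/-- `⟨ξ⟩a := ¬[ξ]¬a`. -/
def dia (ξ : Ordinal.{0}) (a : GLPFormula) : GLPFormula := (box ξ a.neg).neg

end GLPFormula

/-- Hilbert-style derivability for GLP (over all ordinal-indexed modalities):
propositional tautologies (via a complete Hilbert basis), distribution,
transitivity, Löb, negative introspection and monotonicity for `ξ < ζ`,
with modus ponens and necessitation for each modality. -/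
inductive GLPProof : GLPFormula → Prop
  | ax1 (a b : GLPFormula) : GLPProof (a.imp (b.imp a))
  | ax2 (a b c : GLPFormula) :
      GLPProof ((a.imp (b.imp c)).imp ((a.imp b).imp (a.imp c)))
  | ax3 (a b : GLPFormula) : GLPProof ((a.neg.imp b.neg).imp (b.imp a))
  | dist (ξ : Ordinal) (a b : GLPFormula) :
      GLPProof ((GLPFormula.box ξ (a.imp b)).imp
        ((GLPFormula.box ξ a).imp (GLPFormula.box ξ b)))
  | trans (ξ : Ordinal) (a : GLPFormula) :
      GLPProof ((GLPFormula.box ξ a).imp (GLPFormula.box ξ (GLPFormula.box ξ a)))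
  | lob (ξ : Ordinal) (a : GLPFormula) :
      GLPProof ((GLPFormula.box ξ ((GLPFormula.box ξ a).imp a)).imp (GLPFormula.box ξ a))
  | negIntro {ξ ζ : Ordinal} (a : GLPFormula) (h : ξ < ζ) :
      GLPProof ((GLPFormula.dia ξ a).imp (GLPFormula.box ζ (GLPFormula.dia ξ a)))
  | mono {ξ ζ : Ordinal} (a : GLPFormula) (h : ξ < ζ) :
      GLPProof ((GLPFormula.box ξ a).imp (GLPFormula.box ζ a))
  | mp {a b : GLPFormula} : GLPProof (a.imp b) → GLPProof a → GLPProof b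
  | nec (ξ : Ordinal) {a : GLPFormula} : GLPProof a → GLPProof (GLPFormula.box ξ a)

/-!
Negative introspection gives `⟨β⟩φ → [α]⟨β⟩φ`, and `[α]ψ` together with `⟨α⟩⊤` yields `⟨α⟩ψ`.
Conversely `[β]¬φ → [β][β]¬φ → [α][β]¬φ` by transitivity and monotonicity, which contraposes
to `⟨α⟩⟨β⟩φ → ⟨β⟩φ`.
-/

namespace GLPProof

open GLPFormula

variable {a b c : GLPFormula}

theorem weaken (a : GLPFormula) (h : GLPProof b) : GLPProof (a.imp b) :=
  mp (ax1 b a) h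

theorem imp_self (a : GLPFormula) : GLPProof (a.imp a) :=
  mp (mp (ax2 a (a.imp a) a) (ax1 a (a.imp a))) (ax1 a a)

theorem imp_mp (h₁ : GLPProof (a.imp (b.imp c))) (h₂ : GLPProof (a.imp b)) :
    GLPProof (a.imp c) :=
  mp (mp (ax2 a b c) h₁) h₂

theorem imp_trans (h₁ : GLPProof (a.imp b)) (h₂ : GLPProof (b.imp c)) : GLPProof (a.imp c) :=
  imp_mp (weaken a h₂) h₁

theorem imp_comp_imp (a b c : GLPFormula) :
    GLPProof ((b.imp c).imp ((a.imp b).imp (a.imp c))) :=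
  imp_trans (ax1 (b.imp c) a) (ax2 a b c)

theorem imp_swap_imp (a b c : GLPFormula) :
    GLPProof ((a.imp (b.imp c)).imp (b.imp (a.imp c))) :=
  imp_mp (imp_trans (ax2 a b c) (imp_comp_imp b (a.imp b) (a.imp c))) (weaken _ (ax1 b a))

theorem imp_swap (h : GLPProof (a.imp (b.imp c))) : GLPProof (b.imp (a.imp c)) :=
  mp (imp_swap_imp a b c) h

theorem contrapose_imp (a b : GLPFormula) : GLPProof ((a.imp b).imp (b.neg.imp a.neg)) :=
  imp_swap (imp_comp_imp a b bot)

theorem contrapose (h : GLPProof (a.imp b)) : GLPProof (b.neg.imp a.neg) :=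
  mp (contrapose_imp a b) h

theorem not_not_intro (a : GLPFormula) : GLPProof (a.imp a.neg.neg) :=
  imp_swap (imp_self a.neg)

theorem not_not_elim (a : GLPFormula) : GLPProof (a.neg.neg.imp a) :=
  mp (ax3 a a.neg.neg) (not_not_intro a.neg)

theorem bot_elim (a : GLPFormula) : GLPProof (bot.imp a) :=
  mp (ax3 a bot) (weaken a.neg (imp_self bot))

theorem imp_imp_and (a b : GLPFormula) : GLPProof (a.imp (b.imp (a.and b))) :=
  imp_trans (imp_swap (imp_self (a.imp b.neg))) (imp_swap_imp (a.imp b.neg) b bot)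

theorem and_intro {p : GLPFormula} (h₁ : GLPProof (p.imp a)) (h₂ : GLPProof (p.imp b)) :
    GLPProof (p.imp (a.and b)) :=
  imp_mp (imp_trans h₁ (imp_imp_and a b)) h₂

theorem box_mono (ξ : Ordinal) (h : GLPProof (a.imp b)) :
    GLPProof ((box ξ a).imp (box ξ b)) :=
  mp (dist ξ a b) (nec ξ h)

theorem box_imp_dia_imp_dia (ξ : Ordinal) (a b : GLPFormula) :
    GLPProof ((box ξ a).imp ((dia ξ b).imp (dia ξ a))) :=
  have hab : GLPProof (a.imp (a.neg.imp b.neg)) :=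
    imp_trans (not_not_intro a) (mp (imp_comp_imp a.neg bot b.neg) (bot_elim b.neg))
  imp_trans (imp_trans (box_mono ξ hab) (dist ξ a.neg b.neg))
    (contrapose_imp (box ξ a.neg) (box ξ b.neg))

theorem box_imp_box_box_of_lt {ζ ξ : Ordinal} (h : ζ < ξ) (a : GLPFormula) :
    GLPProof ((box ζ a).imp (box ξ (box ζ a))) :=
  imp_trans (trans ζ a) (mono _ h)

theorem dia_dia_imp_dia {ζ ξ : Ordinal} (h : ζ < ξ) (a : GLPFormula) :
    GLPProof ((dia ξ (dia ζ a)).imp (dia ζ a)) :=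
  have hneg : GLPProof ((dia ζ a).neg.imp (box ξ (dia ζ a).neg)) :=
    imp_trans (not_not_elim _)
      (imp_trans (box_imp_box_box_of_lt h a.neg) (box_mono ξ (not_not_intro _)))
  imp_trans (contrapose hneg) (not_not_elim _)

theorem dia_imp_dia_dia {ζ ξ : Ordinal} (h : ζ < ξ) (a : GLPFormula) :
    GLPProof ((dia ξ top).imp ((dia ζ a).imp (dia ξ (dia ζ a)))) :=
  imp_swap (imp_trans (negIntro a h) (box_imp_dia_imp_dia ξ _ top))

end GLPProof

/-- for ordinals `α > β`, GLP proves `⟨α⟩⊤ → (⟨β⟩φ ↔ ⟨α⟩⟨β⟩φ)`. -/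
theorem glp_dia_absorption (α β : Ordinal) (h : β < α) (φ : GLPFormula) :
    GLPProof ((GLPFormula.dia α GLPFormula.top).imp
      ((GLPFormula.dia β φ).iff (GLPFormula.dia α (GLPFormula.dia β φ)))) :=
  GLPProof.and_intro (GLPProof.dia_imp_dia_dia h φ)
    (GLPProof.weaken _ (GLPProof.dia_dia_imp_dia h φ))
end

section
/- Let GL^■ be the extension of Gödel–Löb logic GL (with modality □ satisfying K axioms, transitivity and Löb's axiom) by a new unary operator ■ satisfying: (1) □φ → ■φ, (2) ■(φ→ψ) → (■φ → ■ψ), (3) ■φ → ■■φ, with necessitation for □ only. Then GL^■ derives Löb's axiom for ■: ■(■φ→φ) → ■φ, for every formula φ. -/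
/-- Formulas in the language of GL extended with a second modality `■`. -/
inductive BForm : Type
  | bot : BForm
  | var : ℕ → BForm
  | imp : BForm → BForm → BForm
  | box : BForm → BForm   -- □
  | bbox : BForm → BForm  -- ■

namespace BForm
def neg (a : BForm) : BForm := a.imp bot
end BForm

/-- Derivability in `GL^■`: GL for `□` (Hilbert basis for classical tautologies,
K-distribution, transitivity, Löb, modus ponens and `□`-necessitation), together
with the axiom schemes `□φ → ■φ`, `■(φ→ψ) → (■φ → ■ψ)` and `■φ → ■■φ`.
There is no necessitation rule for `■`. -/
inductive GLBProof : BForm → Prop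
  | ax1 (a b : BForm) : GLBProof (a.imp (b.imp a))
  | ax2 (a b c : BForm) : GLBProof ((a.imp (b.imp c)).imp ((a.imp b).imp (a.imp c)))
  | ax3 (a b : BForm) : GLBProof ((a.neg.imp b.neg).imp (b.imp a))
  | dist (a b : BForm) : GLBProof ((BForm.box (a.imp b)).imp ((BForm.box a).imp (BForm.box b)))
  | trans (a : BForm) : GLBProof ((BForm.box a).imp (BForm.box (BForm.box a)))
  | lob (a : BForm) : GLBProof ((BForm.box ((BForm.box a).imp a)).imp (BForm.box a))
  | boxToBbox (a : BForm) : GLBProof ((BForm.box a).imp (BForm.bbox a))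
  | bdist (a b : BForm) : GLBProof ((BForm.bbox (a.imp b)).imp ((BForm.bbox a).imp (BForm.bbox b)))
  | btrans (a : BForm) : GLBProof ((BForm.bbox a).imp (BForm.bbox (BForm.bbox a)))
  | mp {a b : BForm} : GLBProof (a.imp b) → GLBProof a → GLBProof b
  | nec {a : BForm} : GLBProof a → GLBProof (BForm.box a)

/-!
Put `A := ■φ → φ` and `χ := ■A → ■φ`. By Löb's rule for `□` it suffices to derive `□χ → χ`.
Assume `□χ` and `■A`. Then `■χ`, i.e. `■(■A → ■φ)`, together with `■■A` gives `■■φ`,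
and `■A = ■(■φ → φ)` turns `■■φ` into `■φ`.
-/

namespace GLBProof

local infixr:25 " ⟶ " => BForm.imp
local prefix:max "□" => BForm.box
local prefix:max "■" => BForm.bbox

variable {a b c d : BForm}

lemma weaken (h : GLBProof b) : GLBProof (a ⟶ b) :=
  mp (ax1 b a) h

lemma mp_under (hbc : GLBProof (a ⟶ b ⟶ c)) (hb : GLBProof (a ⟶ b)) : GLBProof (a ⟶ c) :=
  mp (mp (ax2 a b c) hbc) hb

lemma imp_self (a : BForm) : GLBProof (a ⟶ a) :=
  mp_under (ax1 a (a ⟶ a)) (ax1 a a)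

lemma mp_under₂ (hcd : GLBProof (a ⟶ b ⟶ c ⟶ d)) (hc : GLBProof (a ⟶ b ⟶ c)) :
    GLBProof (a ⟶ b ⟶ d) :=
  mp_under (mp_under (weaken (ax2 b c d)) hcd) hc

lemma imp_trans_under₂ (hcd : GLBProof (c ⟶ d)) (hc : GLBProof (a ⟶ b ⟶ c)) :
    GLBProof (a ⟶ b ⟶ d) :=
  mp_under₂ (weaken (weaken hcd)) hc

lemma of_box_imp_self (h : GLBProof (□a ⟶ a)) : GLBProof a :=
  mp h (mp (lob a) (nec h))

lemma box_bboxLob_imp_bboxLob (φ : BForm) :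
    GLBProof (□(■(■φ ⟶ φ) ⟶ ■φ) ⟶ ■(■φ ⟶ φ) ⟶ ■φ) := by
  set A := ■φ ⟶ φ
  set χ := ■A ⟶ ■φ
  have hbχ : GLBProof (□χ ⟶ ■A ⟶ ■χ) := imp_trans_under₂ (boxToBbox χ) (ax1 _ _)
  have hbA : GLBProof (□χ ⟶ ■A ⟶ ■A) := weaken (imp_self _)
  have hbbA : GLBProof (□χ ⟶ ■A ⟶ ■■A) := imp_trans_under₂ (btrans A) hbA
  have hbbφ : GLBProof (□χ ⟶ ■A ⟶ ■■φ) :=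
    mp_under₂ (imp_trans_under₂ (bdist (■A) (■φ)) hbχ) hbbA
  exact mp_under₂ (imp_trans_under₂ (bdist (■φ) φ) hbA) hbbφ

end GLBProof

/-- `GL^■` derives Löb's axiom for `■`: `■(■φ→φ) → ■φ`. -/
theorem glb_lob_for_bbox (φ : BForm) :
    GLBProof ((BForm.bbox ((BForm.bbox φ).imp φ)).imp (BForm.bbox φ)) :=
  GLBProof.of_box_imp_self (GLBProof.box_bboxLob_imp_bboxLob φ)
end

section
/- If T is a sound single-oracle Λ-Münchhausen theory with Münchhausen provability predicate [α]_T, then for every ξ ≺ Λ the consistency statement ⟨ξ⟩_T ⊤ is true in the standard model ℕ. The proof requires no transfinite induction: for ξ = 0 it reduces to consistency of T, and for ξ ≻ 0, a witnessing oracle ⟨ζ⟩_T ψ with □_T(⟨ζ⟩_T ψ → ⊥) contradicts soundness of T. -/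
/-- An abstract arithmetical theory `T`: a type `S` of sentences, derivability
`Prov` (for `T ⊢ ·`), falsum and implication, a standard formalized
provability predicate `box` (for `□_T`), an internal representation `ltS` of
the ordering `≺` on (notations for) ordinals, and internal existential
quantifiers over formulas (`exF`), ordinal notations (`exO`), numbers
(`exN`), and finite sequences of (ordinal, formula) pairs (`exL`). -/
structure MFrame : Type 2 where
  S : Type 1
  Prov : S → Prop
  bot : S
  imp : S → S → S
  box : S → S
  ltS : Ordinal.{0} → Ordinal.{0} → S
  exF : (S → S) → S
  exO : (Ordinal.{0} → S) → S
  exN : (ℕ → S) → S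
  exL : (List (Ordinal.{0} × S) → S) → S

namespace MFrame

variable (F : MFrame)

def neg (a : F.S) : F.S := F.imp a F.bot
def top : F.S := F.neg F.bot
def and (a b : F.S) : F.S := F.neg (F.imp a (F.neg b))
def or (a b : F.S) : F.S := F.imp (F.neg a) b
def iff (a b : F.S) : F.S := F.and (F.imp a b) (F.imp b a)

/-- `⟨ξ⟩_T a := ¬[ξ]_T ¬a` for a candidate Münchhausen predicate `M`. -/
def mdia (M : Ordinal.{0} → F.S → F.S) (ξ : Ordinal.{0}) (a : F.S) : F.S :=
  F.neg (M ξ (F.neg a))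

/-- Basic conditions on the theory `T`: classical propositional logic via a
complete Hilbert basis with modus ponens, the Hilbert–Bernays derivability
conditions for `□_T`, introduction/elimination rules for the internal
existential quantifiers, and correctness of the internal ordering `≺`
(true facts `ξ ≺ ζ` are provable, false ones refutable, and `T` proves `≺`
transitive). -/
structure Basic (F : MFrame) : Prop where
  mp : ∀ {a b : F.S}, F.Prov (F.imp a b) → F.Prov a → F.Prov b
  ax1 : ∀ a b : F.S, F.Prov (F.imp a (F.imp b a))
  ax2 : ∀ a b c : F.S,
    F.Prov (F.imp (F.imp a (F.imp b c)) (F.imp (F.imp a b) (F.imp a c)))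
  ax3 : ∀ a b : F.S,
    F.Prov (F.imp (F.imp (F.neg a) (F.neg b)) (F.imp b a))
  nec : ∀ {a : F.S}, F.Prov a → F.Prov (F.box a)
  dist : ∀ a b : F.S,
    F.Prov (F.imp (F.box (F.imp a b)) (F.imp (F.box a) (F.box b)))
  d3 : ∀ a : F.S, F.Prov (F.imp (F.box a) (F.box (F.box a)))
  ltS_trans : ∀ ξ ζ η : Ordinal,
    F.Prov (F.imp (F.and (F.ltS ξ ζ) (F.ltS ζ η)) (F.ltS ξ η))
  ltS_intro : ∀ {ξ ζ : Ordinal}, ξ < ζ → F.Prov (F.ltS ξ ζ)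
  ltS_not : ∀ {ξ ζ : Ordinal}, ¬ ξ < ζ → F.Prov (F.neg (F.ltS ξ ζ))
  exF_intro : ∀ (G : F.S → F.S) (a : F.S), F.Prov (F.imp (G a) (F.exF G))
  exF_elim : ∀ (G : F.S → F.S) (c : F.S),
    (∀ a, F.Prov (F.imp (G a) c)) → F.Prov (F.imp (F.exF G) c)
  exO_intro : ∀ (G : Ordinal → F.S) (ξ : Ordinal), F.Prov (F.imp (G ξ) (F.exO G))
  exO_elim : ∀ (G : Ordinal → F.S) (c : F.S),
    (∀ ξ, F.Prov (F.imp (G ξ) c)) → F.Prov (F.imp (F.exO G) c)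
  exN_intro : ∀ (G : ℕ → F.S) (n : ℕ), F.Prov (F.imp (G n) (F.exN G))
  exN_elim : ∀ (G : ℕ → F.S) (c : F.S),
    (∀ n, F.Prov (F.imp (G n) c)) → F.Prov (F.imp (F.exN G) c)
  exL_intro : ∀ (G : List (Ordinal × F.S) → F.S) (ρ : List (Ordinal × F.S)),
    F.Prov (F.imp (G ρ) (F.exL G))
  exL_elim : ∀ (G : List (Ordinal × F.S) → F.S) (c : F.S),
    (∀ ρ, F.Prov (F.imp (G ρ) c)) → F.Prov (F.imp (F.exL G) c)

/-- `T` is a single-oracle (one-)Münchhausen theory for `Λ`, with candidate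
predicate `M ζ φ` (for `[ζ]_T φ`): `T` proves the defining recursion
`[ζ]φ ↔ □φ ∨ ∃ψ ∃ξ≺ζ (⟨ξ⟩ψ ∧ □(⟨ξ⟩ψ → φ))` for `ζ ≺ Λ`, proves
`ξ ≺ ζ → [ζ](ξ ≺ ζ)`, and proves that `0` is the `≺`-minimal element. -/
structure OneMunch (F : MFrame) (Λ : Ordinal.{0}) (M : Ordinal.{0} → F.S → F.S) : Prop where
  recEq : ∀ ζ < Λ, ∀ φ : F.S,
    F.Prov (F.iff (M ζ φ)
      (F.or (F.box φ)
        (F.exF fun ψ => F.exO fun ξ =>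
          F.and (F.ltS ξ ζ)
            (F.and (F.mdia M ξ ψ) (F.box (F.imp (F.mdia M ξ ψ) φ))))))
  ltS_box : ∀ {ξ ζ : Ordinal}, ξ < ζ →
    F.Prov (F.imp (F.ltS ξ ζ) (M ζ (F.ltS ξ ζ)))
  min_zero : ∀ ξ : Ordinal, F.Prov (F.neg (F.ltS ξ 0))

/-- The internal conjunction `⟨τ⟩_T σ` asserting of a finite sequence `ρ` of
pairs (ordinal `τ_i`, formula `σ(i)`) that every `⟨τ_i⟩_T σ(i)` holds. -/
def listDia (M : Ordinal.{0} → F.S → F.S) (ρ : List (Ordinal.{0} × F.S)) : F.S :=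
  ρ.foldr (fun p acc => F.and (F.mdia M p.1 p.2) acc) F.top

/-- The internal conjunction asserting `τ ≺ α`, i.e. every ordinal entry of
the sequence `ρ` is `≺ α`. -/
def listLt (ρ : List (Ordinal.{0} × F.S)) (α : Ordinal.{0}) : F.S :=
  ρ.foldr (fun p acc => F.and (F.ltS p.1 α) acc) F.top

/-- `T` is a (multiple-oracle) Münchhausen theory for `Λ` with candidate
predicate `M α φ`: `T` proves the recursion
`[α]φ ↔ □φ ∨ ∃σ ∃τ≺α (⟨τ⟩σ ∧ □(⟨τ⟩σ → φ))`, where the internal existential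
ranges over finite sequences `ρ` of pairs (which encodes the pair `σ, τ` of
equal-length sequences of formulas and of ordinals), together with
`ξ ≺ ζ → [ζ](ξ ≺ ζ)`. -/
structure MultiMunch (F : MFrame) (Λ : Ordinal.{0}) (M : Ordinal.{0} → F.S → F.S) : Prop where
  recEq : ∀ α < Λ, ∀ φ : F.S,
    F.Prov (F.iff (M α φ)
      (F.or (F.box φ)
        (F.exL fun ρ =>
          F.and (F.listLt ρ α)
            (F.and (F.listDia M ρ) (F.box (F.imp (F.listDia M ρ) φ))))))
  ltS_box : ∀ {ξ ζ : Ordinal}, ξ < ζ →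
    F.Prov (F.imp (F.ltS ξ ζ) (M ζ (F.ltS ξ ζ)))
  min_zero : ∀ ξ : Ordinal, F.Prov (F.neg (F.ltS ξ 0))

/-- Truth in the standard model: a predicate `Tr` making `T` sound, commuting
with the logical operations, with `Tr (□φ) ↔ T ⊢ φ` and with the internal
quantifiers and ordering evaluated standardly. -/
structure Truth (F : MFrame) (Tr : F.S → Prop) : Prop where
  sound : ∀ a : F.S, F.Prov a → Tr a
  bot : ¬ Tr F.bot
  imp : ∀ a b : F.S, Tr (F.imp a b) ↔ (Tr a → Tr b)
  box : ∀ a : F.S, Tr (F.box a) ↔ F.Prov a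
  ltS : ∀ ξ ζ : Ordinal, Tr (F.ltS ξ ζ) ↔ ξ < ζ
  exF : ∀ G : F.S → F.S, Tr (F.exF G) ↔ ∃ a, Tr (G a)
  exO : ∀ G : Ordinal → F.S, Tr (F.exO G) ↔ ∃ ξ, Tr (G ξ)
  exN : ∀ G : ℕ → F.S, Tr (F.exN G) ↔ ∃ n, Tr (G n)
  exL : ∀ G : List (Ordinal × F.S) → F.S, Tr (F.exL G) ↔ ∃ ρ, Tr (G ρ)

end MFrame

/-! A true `[ζ]_T φ` makes `φ` true: by the recursion either `T ⊢ φ`, or a true oracle `⟨ξ⟩_T ψ`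
with `T ⊢ ⟨ξ⟩_T ψ → φ`, and soundness of `T` transfers truth along that implication. Applied to
`φ = ¬⊤`, a true `[ξ]_T ¬⊤` would make `¬⊤` true, so `⟨ξ⟩_T ⊤ = ¬[ξ]_T ¬⊤` holds. -/

namespace MFrame

namespace Truth

variable {F : MFrame} {Tr : F.S → Prop}

theorem neg (hTr : F.Truth Tr) (a : F.S) : Tr (F.neg a) ↔ ¬ Tr a := by
  rw [MFrame.neg, hTr.imp]
  exact ⟨fun h ha => hTr.bot (h ha), fun h ha => absurd ha h⟩

theorem top (hTr : F.Truth Tr) : Tr F.top :=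
  (hTr.neg F.bot).2 hTr.bot

theorem and (hTr : F.Truth Tr) (a b : F.S) : Tr (F.and a b) ↔ Tr a ∧ Tr b := by
  rw [MFrame.and, hTr.neg, hTr.imp, hTr.neg]
  tauto

theorem or (hTr : F.Truth Tr) (a b : F.S) : Tr (F.or a b) ↔ Tr a ∨ Tr b := by
  rw [MFrame.or, hTr.imp, hTr.neg]
  tauto

theorem iff (hTr : F.Truth Tr) (a b : F.S) : Tr (F.iff a b) ↔ (Tr a ↔ Tr b) := by
  rw [MFrame.iff, hTr.and, hTr.imp, hTr.imp]
  exact Iff.symm iff_iff_implies_and_implies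

end Truth

theorem OneMunch.reflection {F : MFrame} {Λ : Ordinal} {M : Ordinal → F.S → F.S}
    (hM : F.OneMunch Λ M) {Tr : F.S → Prop} (hTr : F.Truth Tr) {ζ : Ordinal} (hζ : ζ < Λ)
    {φ : F.S} (h : Tr (M ζ φ)) : Tr φ := by
  have hrec := (hTr.iff _ _).1 (hTr.sound _ (hM.recEq ζ hζ φ))
  obtain hφ | hOracle := (hTr.or _ _).1 (hrec.1 h)
  · exact hTr.sound φ ((hTr.box φ).1 hφ)
  · obtain ⟨ψ, hψ⟩ := (hTr.exF _).1 hOracle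
    obtain ⟨ξ, hξ⟩ := (hTr.exO _).1 hψ
    obtain ⟨-, hdia, hbox⟩ := (hTr.and _ _).1 hξ |>.imp_right (hTr.and _ _).1
    exact (hTr.imp _ _).1 (hTr.sound _ ((hTr.box _).1 hbox)) hdia

end MFrame

theorem oneMunch_consistency_true_general (F : MFrame)
    (Λ : Ordinal) (M : Ordinal → F.S → F.S) (hM : F.OneMunch Λ M)
    (Tr : F.S → Prop) (hTr : F.Truth Tr) :
    ∀ ξ < Λ, Tr (F.mdia M ξ F.top) := by
  intro ξ hξ
  rw [MFrame.mdia, hTr.neg]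
  intro h
  exact (hTr.neg _).1 (hM.reflection hTr hξ h) hTr.top

/-- for a sound single-oracle `Λ`-Münchhausen theory `T` with
predicate `[α]_T`, every consistency statement `⟨ξ⟩_T ⊤` with `ξ ≺ Λ` is true
in the standard model. -/
theorem oneMunch_consistency_true (F : MFrame) (hF : F.Basic)
    (Λ : Ordinal) (M : Ordinal → F.S → F.S) (hM : F.OneMunch Λ M)
    (Tr : F.S → Prop) (hTr : F.Truth Tr) :
    ∀ ξ < Λ, Tr (F.mdia M ξ F.top) :=
  oneMunch_consistency_true_general F Λ M hM Tr hTr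
end

section
/- Monotonicity of Münchhausen provability in the ordinal: if T is a Λ-one-Münchhausen theory with predicate [ξ]_T, then T ⊢ ∀ξ≺ζ≺Λ ∀φ ([ξ]_T φ → [ζ]_T φ), and moreover negative introspection holds: T ⊢ ∀ξ≺ζ≺Λ ∀φ (⟨ξ⟩_T φ → [ζ]_T ⟨ξ⟩_T φ). Neither fact requires induction. -/
/-! Unfold `[ξ]_T φ` by the recursion. A disjunct `□_T φ` is also a reason for `[ζ]_T φ`, and an
oracle `⟨η⟩_T ψ` with `η ≺ ξ` serves for `ζ` as well, since `T` proves `η ≺ ξ ≺ ζ → η ≺ ζ`.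
For negative introspection `⟨ξ⟩_T φ` is its own oracle, as `□_T(⟨ξ⟩_T φ → ⟨ξ⟩_T φ)` holds by
necessitation. Only the recursion at the given ordinals is used, no induction. -/

namespace MFrame

/-- `ψ` is a `ξ`-oracle for `φ`; this is the body of the second disjunct of `OneMunch.recEq`. -/
def oracle (F : MFrame) (M : Ordinal.{0} → F.S → F.S) (ξ : Ordinal.{0}) (ψ φ : F.S) : F.S :=
  F.and (F.mdia M ξ ψ) (F.box (F.imp (F.mdia M ξ ψ) φ))

namespace Basic

variable {F : MFrame}

theorem imp_self (hF : F.Basic) (a : F.S) : F.Prov (F.imp a a) :=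
  hF.mp (hF.mp (hF.ax2 a (F.imp a a) a) (hF.ax1 a (F.imp a a))) (hF.ax1 a a)

theorem imp_of_prov (hF : F.Basic) {a : F.S} (b : F.S) (h : F.Prov a) : F.Prov (F.imp b a) :=
  hF.mp (hF.ax1 a b) h

theorem imp_mp (hF : F.Basic) {a b c : F.S} (h₁ : F.Prov (F.imp a (F.imp b c)))
    (h₂ : F.Prov (F.imp a b)) : F.Prov (F.imp a c) :=
  hF.mp (hF.mp (hF.ax2 a b c) h₁) h₂

theorem imp_mp₂ (hF : F.Basic) {a b c d : F.S} (h₁ : F.Prov (F.imp a (F.imp b (F.imp c d))))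
    (h₂ : F.Prov (F.imp a (F.imp b c))) : F.Prov (F.imp a (F.imp b d)) :=
  hF.imp_mp (hF.imp_mp (hF.imp_of_prov a (hF.ax2 b c d)) h₁) h₂

theorem imp_trans (hF : F.Basic) {a b c : F.S} (h₁ : F.Prov (F.imp a b))
    (h₂ : F.Prov (F.imp b c)) : F.Prov (F.imp a c) :=
  hF.imp_mp (hF.imp_of_prov a h₂) h₁

theorem imp_imp_of_imp (hF : F.Basic) {a b : F.S} (h : F.Prov (F.imp a b)) (c : F.S) :
    F.Prov (F.imp a (F.imp c b)) :=
  hF.imp_trans h (hF.ax1 b c)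

theorem imp_comm (hF : F.Basic) {a b c : F.S} (h : F.Prov (F.imp a (F.imp b c))) :
    F.Prov (F.imp b (F.imp a c)) :=
  hF.imp_trans (hF.ax1 b a) (hF.mp (hF.ax2 a b c) h)

theorem bot_imp (hF : F.Basic) (a : F.S) : F.Prov (F.imp F.bot a) :=
  hF.mp (hF.ax3 a F.bot) (hF.imp_of_prov (F.neg a) (hF.imp_self F.bot))

theorem not_imp_imp (hF : F.Basic) (a b : F.S) : F.Prov (F.imp (F.neg a) (F.imp a b)) :=
  hF.imp_mp₂ (hF.imp_of_prov _ (hF.imp_of_prov a (hF.bot_imp b)))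
    (hF.imp_mp₂ (hF.ax1 (F.neg a) a) (hF.imp_of_prov _ (hF.imp_self a)))

theorem not_not_intro (hF : F.Basic) (a : F.S) : F.Prov (F.imp a (F.neg (F.neg a))) :=
  hF.imp_comm (hF.imp_self (F.neg a))

theorem not_not_elim (hF : F.Basic) (a : F.S) : F.Prov (F.imp (F.neg (F.neg a)) a) :=
  hF.mp (hF.ax3 a (F.neg (F.neg a))) (hF.not_not_intro (F.neg a))

theorem contrapose (hF : F.Basic) {a b : F.S} (h : F.Prov (F.imp a b)) :
    F.Prov (F.imp (F.neg b) (F.neg a)) :=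
  hF.imp_comm (hF.imp_trans h (hF.not_not_intro b))

theorem and_intro (hF : F.Basic) {a b c : F.S} (ha : F.Prov (F.imp c a))
    (hb : F.Prov (F.imp c b)) : F.Prov (F.imp c (F.and a b)) :=
  hF.imp_mp₂ (hF.imp_mp₂ (hF.imp_of_prov c (hF.imp_self _)) (hF.imp_imp_of_imp ha _))
    (hF.imp_imp_of_imp hb _)

theorem and_left (hF : F.Basic) (a b : F.S) : F.Prov (F.imp (F.and a b) a) :=
  hF.imp_trans (hF.contrapose (hF.not_imp_imp a (F.neg b))) (hF.not_not_elim a)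

theorem and_right (hF : F.Basic) (a b : F.S) : F.Prov (F.imp (F.and a b) b) :=
  hF.imp_trans (hF.contrapose (hF.ax1 (F.neg b) a)) (hF.not_not_elim b)

theorem and_imp_and_left (hF : F.Basic) {a a' : F.S} (h : F.Prov (F.imp a a')) (b : F.S) :
    F.Prov (F.imp (F.and a b) (F.and a' b)) :=
  hF.and_intro (hF.imp_trans (hF.and_left a b) h) (hF.and_right a b)

theorem or_inl (hF : F.Basic) (a b : F.S) : F.Prov (F.imp a (F.or a b)) :=
  hF.imp_comm (hF.not_imp_imp a b)

theorem or_inr (hF : F.Basic) (a b : F.S) : F.Prov (F.imp b (F.or a b)) :=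
  hF.ax1 b (F.neg a)

theorem or_elim (hF : F.Basic) {a b c : F.S} (ha : F.Prov (F.imp a c))
    (hb : F.Prov (F.imp b c)) : F.Prov (F.imp (F.or a b) c) := by
  have hb' : F.Prov (F.imp (F.or a b) (F.imp (F.neg c) b)) :=
    hF.imp_mp₂ (hF.ax1 (F.or a b) (F.neg c))
      (hF.imp_of_prov _ (hF.contrapose ha))
  have hnb : F.Prov (F.imp (F.or a b) (F.imp (F.neg c) (F.neg b))) :=
    hF.imp_of_prov _ (hF.contrapose hb)
  exact hF.imp_trans (hF.imp_mp₂ hnb hb') (hF.not_not_elim c)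

theorem iff_mp (hF : F.Basic) {a b : F.S} (h : F.Prov (F.iff a b)) : F.Prov (F.imp a b) :=
  hF.mp (hF.and_left _ _) h

theorem iff_mpr (hF : F.Basic) {a b : F.S} (h : F.Prov (F.iff a b)) : F.Prov (F.imp b a) :=
  hF.mp (hF.and_right _ _) h

theorem imp_exF_exO (hF : F.Basic) (G : F.S → Ordinal.{0} → F.S) (ψ : F.S) (ξ : Ordinal.{0}) :
    F.Prov (F.imp (G ψ ξ) (F.exF fun ψ => F.exO (G ψ))) :=
  hF.imp_trans (hF.exO_intro (G ψ) ξ) (hF.exF_intro (fun ψ => F.exO (G ψ)) ψ)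

theorem exF_exO_imp (hF : F.Basic) {G : F.S → Ordinal.{0} → F.S} {c : F.S}
    (h : ∀ ψ ξ, F.Prov (F.imp (G ψ ξ) c)) :
    F.Prov (F.imp (F.exF fun ψ => F.exO (G ψ)) c) :=
  hF.exF_elim _ c fun ψ => hF.exO_elim _ c (h ψ)

theorem ltS_imp_ltS_of_lt (hF : F.Basic) {ξ ζ : Ordinal.{0}} (h : ξ < ζ) (η : Ordinal.{0}) :
    F.Prov (F.imp (F.ltS η ξ) (F.ltS η ζ)) :=
  hF.imp_trans (hF.and_intro (hF.imp_self _) (hF.imp_of_prov _ (hF.ltS_intro h)))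
    (hF.ltS_trans η ξ ζ)

end Basic

namespace OneMunch

variable {F : MFrame} {Λ : Ordinal.{0}} {M : Ordinal.{0} → F.S → F.S}

theorem box_imp (hM : F.OneMunch Λ M) (hF : F.Basic) {ζ : Ordinal.{0}} (hζ : ζ < Λ)
    (φ : F.S) : F.Prov (F.imp (F.box φ) (M ζ φ)) :=
  hF.imp_trans (hF.or_inl _ _) (hF.iff_mpr (hM.recEq ζ hζ φ))

theorem oracle_imp (hM : F.OneMunch Λ M) (hF : F.Basic) {ζ : Ordinal.{0}} (hζ : ζ < Λ)
    (η : Ordinal.{0}) (ψ φ : F.S) :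
    F.Prov (F.imp (F.and (F.ltS η ζ) (F.oracle M η ψ φ)) (M ζ φ)) :=
  hF.imp_trans (hF.imp_exF_exO (fun ψ η => F.and (F.ltS η ζ) (F.oracle M η ψ φ)) ψ η)
    (hF.imp_trans (hF.or_inr _ _) (hF.iff_mpr (hM.recEq ζ hζ φ)))

theorem imp_of_box_imp_of_oracle_imp (hM : F.OneMunch Λ M) (hF : F.Basic) {ζ : Ordinal.{0}}
    (hζ : ζ < Λ) {φ c : F.S} (hbox : F.Prov (F.imp (F.box φ) c))
    (horacle : ∀ ψ η, F.Prov (F.imp (F.and (F.ltS η ζ) (F.oracle M η ψ φ)) c)) :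
    F.Prov (F.imp (M ζ φ) c) :=
  hF.imp_trans (hF.iff_mp (hM.recEq ζ hζ φ)) (hF.or_elim hbox (hF.exF_exO_imp horacle))

theorem imp_of_lt (hM : F.OneMunch Λ M) (hF : F.Basic) {ξ ζ : Ordinal.{0}} (hξζ : ξ < ζ)
    (hζ : ζ < Λ) (φ : F.S) : F.Prov (F.imp (M ξ φ) (M ζ φ)) :=
  hM.imp_of_box_imp_of_oracle_imp hF (hξζ.trans hζ) (hM.box_imp hF hζ φ) fun ψ η =>
    hF.imp_trans (hF.and_imp_and_left (hF.ltS_imp_ltS_of_lt hξζ η) _)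
      (hM.oracle_imp hF hζ η ψ φ)

theorem mdia_imp_mdia_of_lt (hM : F.OneMunch Λ M) (hF : F.Basic) {ξ ζ : Ordinal.{0}}
    (hξζ : ξ < ζ) (hζ : ζ < Λ) (φ : F.S) :
    F.Prov (F.imp (F.mdia M ξ φ) (M ζ (F.mdia M ξ φ))) :=
  hF.imp_trans
    (hF.and_intro (hF.imp_of_prov _ (hF.ltS_intro hξζ))
      (hF.and_intro (hF.imp_self _) (hF.imp_of_prov _ (hF.nec (hF.imp_self _)))))
    (hM.oracle_imp hF hζ ξ φ _)

end OneMunch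

end MFrame

/-- monotonicity in the ordinal and negative introspection for
one-Münchhausen provability: for `ξ ≺ ζ ≺ Λ`,
`T ⊢ [ξ]_T φ → [ζ]_T φ` and `T ⊢ ⟨ξ⟩_T φ → [ζ]_T ⟨ξ⟩_T φ`. -/
theorem oneMunch_mono_and_negIntro (F : MFrame) (hF : F.Basic)
    (Λ : Ordinal) (M : Ordinal → F.S → F.S) (hM : F.OneMunch Λ M) :
    ∀ ξ ζ : Ordinal, ξ < ζ → ζ < Λ → ∀ φ : F.S,
      F.Prov (F.imp (M ξ φ) (M ζ φ)) ∧
      F.Prov (F.imp (F.mdia M ξ φ) (M ζ (F.mdia M ξ φ))) :=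
  fun _ _ hξζ hζ φ => ⟨hM.imp_of_lt hF hξζ hζ φ, hM.mdia_imp_mdia_of_lt hF hξζ hζ φ⟩
end

section
/- Transitivity for multiple-oracle Münchhausen provability without induction: if T is a Λ-Münchhausen theory with predicate [α]_T, then T ⊢ ∀α≺Λ ∀φ ( [α]_T φ → [α]_T [α]_T φ ). -/
/-! Unfold `[α]φ` once by the recursion. If `□φ`, then `□□φ`, hence `□[α]φ` and `[α][α]φ`.
Otherwise there is a witness `ρ = (τ, σ)` with `τ ≺ α`, `⟨τ⟩σ` and `□(⟨τ⟩σ → φ)`. Since `≺` is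
correctly represented, `τ ≺ α` is either provable or refutable in `T`. In the refutable case there
is nothing to show. In the provable case `□(⟨τ⟩σ → φ)` gives `□□(⟨τ⟩σ → φ)`, and inside `□` the
same witness turns `⟨τ⟩σ` into `[α]φ`; so `□(⟨τ⟩σ → [α]φ)`, and `ρ` witnesses `[α][α]φ`. -/

namespace MFrame

variable {F : MFrame}

inductive Derivable (F : MFrame) (Γ : List F.S) : F.S → Prop
  | hyp {a} : a ∈ Γ → Derivable F Γ a
  | prov {a} : F.Prov a → Derivable F Γ a
  | mp {a b} : Derivable F Γ (F.imp a b) → Derivable F Γ a → Derivable F Γ b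

namespace Derivable

variable {Γ : List F.S} {a b : F.S}

theorem hyp_head : Derivable F (a :: Γ) a :=
  .hyp List.mem_cons_self

theorem hyp_second : Derivable F (b :: a :: Γ) a :=
  .hyp (List.mem_cons_of_mem _ List.mem_cons_self)

theorem cons (h : Derivable F Γ a) : Derivable F (b :: Γ) a := by
  induction h with
  | hyp h => exact .hyp (List.mem_cons_of_mem _ h)
  | prov h => exact .prov h
  | mp _ _ ih₁ ih₂ => exact .mp ih₁ ih₂

end Derivable

namespace Basic

variable (hF : F.Basic)
include hF

theorem prov_imp_self (a : F.S) : F.Prov (F.imp a a) :=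
  hF.mp (hF.mp (hF.ax2 a (F.imp a a) a) (hF.ax1 a (F.imp a a))) (hF.ax1 a a)

theorem derivable_imp {Γ : List F.S} {a b : F.S} (h : Derivable F (a :: Γ) b) :
    Derivable F Γ (F.imp a b) := by
  induction h with
  | hyp hm =>
    rcases List.mem_cons.1 hm with rfl | hm
    · exact .prov (hF.prov_imp_self _)
    · exact .mp (.prov (hF.ax1 _ a)) (.hyp hm)
  | prov h => exact .mp (.prov (hF.ax1 _ a)) (.prov h)
  | mp _ _ ih₁ ih₂ => exact .mp (.mp (.prov (hF.ax2 a _ _)) ih₁) ih₂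

theorem prov_of_derivable_nil {a : F.S} (h : Derivable F [] a) : F.Prov a := by
  induction h with
  | hyp hm => exact absurd hm List.not_mem_nil
  | prov h => exact h
  | mp _ _ ih₁ ih₂ => exact hF.mp ih₁ ih₂

theorem prov_imp_of_derivable {a b : F.S} (h : Derivable F [a] b) : F.Prov (F.imp a b) :=
  hF.prov_of_derivable_nil (hF.derivable_imp h)

theorem prov_imp_trans {a b c : F.S} (h₁ : F.Prov (F.imp a b)) (h₂ : F.Prov (F.imp b c)) :
    F.Prov (F.imp a c) :=
  hF.prov_imp_of_derivable (.mp (.prov h₂) (.mp (.prov h₁) .hyp_head))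

theorem prov_efq (a : F.S) : F.Prov (F.imp F.bot a) :=
  hF.mp (hF.ax3 a F.bot) (hF.mp (hF.ax1 (F.neg F.bot) (F.neg a)) (hF.prov_imp_self F.bot))

theorem prov_dne (a : F.S) : F.Prov (F.imp (F.neg (F.neg a)) a) :=
  hF.mp (hF.ax3 a (F.neg (F.neg a))) <| hF.prov_of_derivable_nil <|
    hF.derivable_imp <| hF.derivable_imp (.mp .hyp_head .hyp_second)

theorem derivable_by_contra {Γ : List F.S} {a : F.S} (h : Derivable F (F.neg a :: Γ) F.bot) :
    Derivable F Γ a :=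
  .mp (.prov (hF.prov_dne a)) (hF.derivable_imp h)

theorem derivable_and {Γ : List F.S} {a b : F.S} (ha : Derivable F Γ a)
    (hb : Derivable F Γ b) : Derivable F Γ (F.and a b) :=
  hF.derivable_imp (.mp (.mp .hyp_head ha.cons) hb.cons)

theorem derivable_and_left {Γ : List F.S} {a b : F.S} (h : Derivable F Γ (F.and a b)) :
    Derivable F Γ a :=
  hF.derivable_by_contra <| .mp h.cons <| hF.derivable_imp <|
    .mp (.prov (hF.prov_efq _)) (.mp .hyp_second .hyp_head)

theorem derivable_and_right {Γ : List F.S} {a b : F.S} (h : Derivable F Γ (F.and a b)) :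
    Derivable F Γ b :=
  hF.derivable_by_contra <| .mp h.cons <| .mp (.prov (hF.ax1 _ a)) .hyp_head

theorem prov_and_left (a b : F.S) : F.Prov (F.imp (F.and a b) a) :=
  hF.prov_imp_of_derivable (hF.derivable_and_left .hyp_head)

theorem prov_and_right (a b : F.S) : F.Prov (F.imp (F.and a b) b) :=
  hF.prov_imp_of_derivable (hF.derivable_and_right .hyp_head)

theorem prov_and_imp_and_right {a b c : F.S} (h : F.Prov (F.imp b c)) :
    F.Prov (F.imp (F.and a b) (F.and a c)) :=
  hF.prov_imp_of_derivable <| hF.derivable_and (hF.derivable_and_left .hyp_head)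
    (.mp (.prov h) (hF.derivable_and_right .hyp_head))

theorem prov_or_inl (a b : F.S) : F.Prov (F.imp a (F.or a b)) :=
  hF.prov_of_derivable_nil <| hF.derivable_imp <| hF.derivable_imp <|
    .mp (.prov (hF.prov_efq b)) (.mp .hyp_head .hyp_second)

theorem prov_or_inr (a b : F.S) : F.Prov (F.imp b (F.or a b)) :=
  hF.ax1 b (F.neg a)

theorem prov_or_elim {a b c : F.S} (h₁ : F.Prov (F.imp a c)) (h₂ : F.Prov (F.imp b c)) :
    F.Prov (F.imp (F.or a b) c) := by
  refine hF.prov_imp_of_derivable <| hF.derivable_by_contra ?_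
  have hna : Derivable F [F.neg c, F.or a b] (F.neg a) :=
    hF.derivable_imp (.mp .hyp_second (.mp (.prov h₁) .hyp_head))
  exact .mp .hyp_head (.mp (.prov h₂) (.mp .hyp_second hna))

theorem prov_iff_mp {a b : F.S} (h : F.Prov (F.iff a b)) : F.Prov (F.imp a b) :=
  hF.prov_of_derivable_nil (hF.derivable_and_left (.prov h))

theorem prov_iff_mpr {a b : F.S} (h : F.Prov (F.iff a b)) : F.Prov (F.imp b a) :=
  hF.prov_of_derivable_nil (hF.derivable_and_right (.prov h))

theorem prov_box_imp_box {a b : F.S} (h : F.Prov (F.imp a b)) :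
    F.Prov (F.imp (F.box a) (F.box b)) :=
  hF.mp (hF.dist a b) (hF.nec h)

theorem prov_listLt_or_prov_neg_listLt (ρ : List (Ordinal × F.S)) (α : Ordinal) :
    F.Prov (F.listLt ρ α) ∨ F.Prov (F.neg (F.listLt ρ α)) := by
  induction ρ with
  | nil => exact .inl (hF.prov_imp_self F.bot)
  | cons q ρ ih =>
    by_cases hq : q.1 < α
    · exact ih.imp
        (fun hρ => hF.prov_of_derivable_nil <|
          hF.derivable_and (.prov (hF.ltS_intro hq)) (.prov hρ))
        (hF.prov_imp_trans (hF.prov_and_right _ _))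
    · exact .inr (hF.prov_imp_trans (hF.prov_and_left _ _) (hF.ltS_not hq))

end Basic

/-- The right disjunct of the recursion for `[α]_T φ` at the witness `ρ` encoding `σ, τ`:
`τ ≺ α ∧ ⟨τ⟩σ ∧ □(⟨τ⟩σ → φ)`. -/
def munchWitness (M : Ordinal.{0} → F.S → F.S) (α : Ordinal.{0}) (φ : F.S)
    (ρ : List (Ordinal.{0} × F.S)) : F.S :=
  F.and (F.listLt ρ α) (F.and (F.listDia M ρ) (F.box (F.imp (F.listDia M ρ) φ)))

namespace MultiMunch

variable {Λ α : Ordinal} {M : Ordinal → F.S → F.S} (hF : F.Basic) (hM : F.MultiMunch Λ M)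
  (hα : α < Λ)
include hF hM hα

theorem prov_box_imp (φ : F.S) : F.Prov (F.imp (F.box φ) (M α φ)) :=
  hF.prov_imp_trans (hF.prov_or_inl _ _) (hF.prov_iff_mpr (hM.recEq α hα φ))

theorem prov_munchWitness_imp (φ : F.S) (ρ : List (Ordinal × F.S)) :
    F.Prov (F.imp (F.munchWitness M α φ ρ) (M α φ)) :=
  hF.prov_imp_trans (hF.prov_imp_trans (hF.exL_intro _ ρ) (hF.prov_or_inr _ _))
    (hF.prov_iff_mpr (hM.recEq α hα φ))

theorem prov_imp_of_cases {φ c : F.S} (hbox : F.Prov (F.imp (F.box φ) c))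
    (hwit : ∀ ρ, F.Prov (F.imp (F.munchWitness M α φ ρ) c)) :
    F.Prov (F.imp (M α φ) c) :=
  hF.prov_imp_trans (hF.prov_iff_mp (hM.recEq α hα φ))
    (hF.prov_or_elim hbox (hF.exL_elim _ _ hwit))

theorem prov_box_imp_munch_munch (φ : F.S) : F.Prov (F.imp (F.box φ) (M α (M α φ))) :=
  hF.prov_imp_trans (hF.d3 φ) <|
    hF.prov_imp_trans (hF.prov_box_imp_box (hM.prov_box_imp hF hα φ)) (hM.prov_box_imp hF hα _)

theorem prov_munchWitness_imp_munchWitness_munch {ρ : List (Ordinal × F.S)} (φ : F.S)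
    (hρ : F.Prov (F.listLt ρ α)) :
    F.Prov (F.imp (F.munchWitness M α φ ρ) (F.munchWitness M α (M α φ) ρ)) := by
  have hunder : F.Prov (F.imp (F.box (F.imp (F.listDia M ρ) φ))
      (F.imp (F.listDia M ρ) (M α φ))) :=
    hF.prov_of_derivable_nil <| hF.derivable_imp <| hF.derivable_imp <|
      .mp (.prov (hM.prov_munchWitness_imp hF hα φ ρ))
        (hF.derivable_and (.prov hρ) (hF.derivable_and .hyp_head .hyp_second))
  have hboxed : F.Prov (F.imp (F.box (F.imp (F.listDia M ρ) φ))
      (F.box (F.imp (F.listDia M ρ) (M α φ)))) :=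
    hF.prov_imp_trans (hF.d3 _) (hF.prov_box_imp_box hunder)
  exact hF.prov_and_imp_and_right (hF.prov_and_imp_and_right hboxed)

end MultiMunch

end MFrame

/-- transitivity for multiple-oracle Münchhausen provability,
without induction: `T ⊢ [α]_T φ → [α]_T [α]_T φ` for `α ≺ Λ`. -/
theorem multiMunch_transitivity (F : MFrame) (hF : F.Basic)
    (Λ : Ordinal) (M : Ordinal → F.S → F.S) (hM : F.MultiMunch Λ M) :
    ∀ α < Λ, ∀ φ : F.S,
      F.Prov (F.imp (M α φ) (M α (M α φ))) := by
  intro α hα φ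
  refine hM.prov_imp_of_cases hF hα (hM.prov_box_imp_munch_munch hF hα φ) fun ρ => ?_
  rcases hF.prov_listLt_or_prov_neg_listLt ρ α with hρ | hρ
  · exact hF.prov_imp_trans (hM.prov_munchWitness_imp_munchWitness_munch hF hα φ hρ)
      (hM.prov_munchWitness_imp hF hα _ ρ)
  · exact hF.prov_imp_trans (hF.prov_and_left _ _) (hF.prov_imp_trans hρ (hF.prov_efq _))
end
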